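/- arXiv:2003.03451 — 2 statements merged into one kernel-verified Lean document; each statement's English description precedes it below -/
import Mathlib

section
/- Let (X, d, ≪, ≤, τ) and (Y, d̃, ≪̃, ≤̃, τ̃) be Lorentzian length spaces such that X is causally continuous and the metric space (Y, d̃) is locally compact, and let f : X → Y be a surjective distance homothetic map. Then Y is causally continuous. -/
open scoped NNReal ENNReal
open Set Filter Topology

/-- A Lorentzian pre-length space: a causal space `(X, ≪, ≤)` carried by a metric space `X`,
together with a time separation function `τ : X × X → [0, ∞]`. -/
structure LorentzianPreLengthSpace (X : Type*) [MetricSpace X] where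
  /-- The chronological relation `≪`. -/
  chron : X → X → Prop
  /-- The causal relation `≤`. -/
  causal : X → X → Prop
  chron_trans : ∀ {x y z : X}, chron x y → chron y z → chron x z
  causal_refl : ∀ x : X, causal x x
  causal_trans : ∀ {x y z : X}, causal x y → causal y z → causal x z
  chron_imp_causal : ∀ {x y : X}, chron x y → causal x y
  /-- The time separation function `τ`. -/
  tau : X → X → ℝ≥0∞
  tau_lsc : LowerSemicontinuous fun p : X × X => tau p.1 p.2
  tau_rev_triangle : ∀ {x y z : X}, causal x y → causal y z → tau x y + tau y z ≤ tau x z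
  tau_eq_zero : ∀ {x y : X}, ¬ causal x y → tau x y = 0
  tau_pos_iff : ∀ {x y : X}, 0 < tau x y ↔ chron x y

namespace LorentzianPreLengthSpace

variable {X : Type*} [MetricSpace X] (L : LorentzianPreLengthSpace X)

/-- Chronological future `I⁺(x)`. -/
def Iplus (x : X) : Set X := {y | L.chron x y}

/-- Chronological past `I⁻(x)`. -/
def Iminus (x : X) : Set X := {y | L.chron y x}

/-- Causal future `J⁺(x)`. -/
def Jplus (x : X) : Set X := {y | L.causal x y}

/-- Causal past `J⁻(x)`. -/
def Jminus (x : X) : Set X := {y | L.causal y x}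

/-- A future directed causal curve on `[a,b]`: non-constant, Lipschitz, and order preserving
from the order of `[a,b]` to the causal relation. -/
def IsFutureCausalCurve (γ : ℝ → X) (a b : ℝ) : Prop :=
  a < b ∧ (∃ K : ℝ≥0, LipschitzOnWith K γ (Icc a b)) ∧
    (∃ s ∈ Icc a b, ∃ t ∈ Icc a b, γ s ≠ γ t) ∧
    ∀ ⦃s⦄, s ∈ Icc a b → ∀ ⦃t⦄, t ∈ Icc a b → s < t → L.causal (γ s) (γ t)

/-- A future directed timelike curve on `[a,b]`. -/
def IsFutureTimelikeCurve (γ : ℝ → X) (a b : ℝ) : Prop :=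
  a < b ∧ (∃ K : ℝ≥0, LipschitzOnWith K γ (Icc a b)) ∧
    (∃ s ∈ Icc a b, ∃ t ∈ Icc a b, γ s ≠ γ t) ∧
    ∀ ⦃s⦄, s ∈ Icc a b → ∀ ⦃t⦄, t ∈ Icc a b → s < t → L.chron (γ s) (γ t)

/-- The `τ`-length of a curve: the infimum over all partitions
`a = t₀ < t₁ < ⋯ < t_N = b` (with `N ≥ 1`) of `∑ τ(γ(tᵢ), γ(tᵢ₊₁))`. -/
noncomputable def tauLength (γ : ℝ → X) (a b : ℝ) : ℝ≥0∞ :=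
  ⨅ n : ℕ, ⨅ t : {t : Fin (n + 2) → ℝ // StrictMono t ∧ t 0 = a ∧ t (Fin.last (n + 1)) = b},
    ∑ i : Fin (n + 1), L.tau (γ (t.1 i.castSucc)) (γ (t.1 i.succ))

/-- Causal path connectedness: causally related (distinct) points are joined by a future
directed causal curve, chronologically related points by a future directed timelike curve. -/
def CausallyPathConnected : Prop :=
  (∀ x y : X, L.causal x y → x ≠ y →
      ∃ γ : ℝ → X, ∃ a b : ℝ, L.IsFutureCausalCurve γ a b ∧ γ a = x ∧ γ b = y) ∧
  (∀ x y : X, L.chron x y →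
      ∃ γ : ℝ → X, ∃ a b : ℝ, L.IsFutureTimelikeCurve γ a b ∧ γ a = x ∧ γ b = y)

/-- `p ≤_U q`: there is a future directed causal curve from `p` to `q` with image in `U`. -/
def CausalInside (U : Set X) (p q : X) : Prop :=
  ∃ γ : ℝ → X, ∃ a b : ℝ, L.IsFutureCausalCurve γ a b ∧ γ a = p ∧ γ b = q ∧ γ '' Icc a b ⊆ U

/-- `U` is causally closed: the relation `≤_U` is closed under limits inside `U`. -/
def CausallyClosedNbhd (U : Set X) : Prop :=
  ∀ (p q : X) (pn qn : ℕ → X), (∀ n, L.CausalInside U (pn n) (qn n)) →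
    Tendsto pn atTop (𝓝 p) → Tendsto qn atTop (𝓝 q) → p ∈ U → q ∈ U → L.CausalInside U p q

/-- Every point has a causally closed open neighborhood. -/
def LocallyCausallyClosed : Prop :=
  ∀ x : X, ∃ U : Set X, IsOpen U ∧ x ∈ U ∧ L.CausallyClosedNbhd U

/-- Localizability: every point has a localizing open neighborhood `Ω`. -/
def Localizable : Prop :=
  ∀ x : X, ∃ Ω : Set X, IsOpen Ω ∧ x ∈ Ω ∧
    (∃ C : ℝ≥0, ∀ (γ : ℝ → X) (a b : ℝ), L.IsFutureCausalCurve γ a b →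
        γ '' Icc a b ⊆ Ω → eVariationOn γ (Icc a b) ≤ C) ∧
    ∃ ω : X → X → ℝ≥0∞,
      ContinuousOn (fun pq : X × X => ω pq.1 pq.2) (Ω ×ˢ Ω) ∧
      (∀ p ∈ Ω, ∀ q ∈ Ω, ω p q ≠ ⊤) ∧
      (∀ p ∈ Ω, ∀ q ∈ Ω, ∀ r ∈ Ω, L.causal p q → L.causal q r → ω p q + ω q r ≤ ω p r) ∧
      (∀ p ∈ Ω, ∀ q ∈ Ω, ¬ L.causal p q → ω p q = 0) ∧
      (∀ p ∈ Ω, ∀ q ∈ Ω, (0 < ω p q ↔ L.chron p q)) ∧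
      (∀ y ∈ Ω, (L.Iplus y ∩ Ω).Nonempty ∧ (L.Iminus y ∩ Ω).Nonempty) ∧
      (∀ p ∈ Ω, ∀ q ∈ Ω, L.causal p q → p ≠ q →
        ∃ γ : ℝ → X, ∃ a b : ℝ, L.IsFutureCausalCurve γ a b ∧ γ a = p ∧ γ b = q ∧
          γ '' Icc a b ⊆ Ω ∧ L.tauLength γ a b = ω p q ∧
          ∀ (σ : ℝ → X) (c e : ℝ), L.IsFutureCausalCurve σ c e → σ c = p → σ e = q →
            σ '' Icc c e ⊆ Ω → L.tauLength σ c e ≤ L.tauLength γ a b)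

/-- `L` is a Lorentzian length space: causally path connected, locally causally closed,
localizable, and `τ` is the supremum of `τ`-lengths of connecting causal curves
(the supremum of the empty set being `0`). -/
def IsLengthSpace : Prop :=
  L.CausallyPathConnected ∧ L.LocallyCausallyClosed ∧ L.Localizable ∧
    ∀ x y : X, L.tau x y = sSup {ℓ : ℝ≥0∞ | ∃ γ : ℝ → X, ∃ a b : ℝ,
      L.IsFutureCausalCurve γ a b ∧ γ a = x ∧ γ b = y ∧ ℓ = L.tauLength γ a b}

/-- `K⁺`: the smallest closed and transitive relation containing `J⁺`. -/
def Kplus : Set (X × X) :=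
  ⋂₀ {R : Set (X × X) | IsClosed R ∧ (∀ a b c : X, (a, b) ∈ R → (b, c) ∈ R → (a, c) ∈ R) ∧
      {pq : X × X | L.causal pq.1 pq.2} ⊆ R}

/-- The Alexandrov topology, generated by the chronological diamonds. -/
def AlexandrovTopology : TopologicalSpace X :=
  TopologicalSpace.generateFrom {s : Set X | ∃ x y : X, s = L.Iplus x ∩ L.Iminus y}

/-- Strong causality: the Alexandrov topology coincides with the metric topology. -/
def StronglyCausal : Prop :=
  L.AlexandrovTopology = (inferInstance : TopologicalSpace X)

/-- Non-total imprisonment: causal curves in a compact set have uniformly bounded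
`d`-arclength. -/
def NonTotallyImprisoning : Prop :=
  ∀ K : Set X, IsCompact K → ∃ C : ℝ≥0, ∀ (γ : ℝ → X) (a b : ℝ),
    L.IsFutureCausalCurve γ a b → γ '' Icc a b ⊆ K → eVariationOn γ (Icc a b) ≤ C

/-- Global hyperbolicity. -/
def GloballyHyperbolic : Prop :=
  L.NonTotallyImprisoning ∧ ∀ x y : X, IsCompact (L.Jplus x ∩ L.Jminus y)

/-- Causality: the causal relation is antisymmetric. -/
def Causal : Prop := ∀ x y : X, L.causal x y → L.causal y x → x = y

/-- Causal simplicity. -/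
def CausallySimple : Prop :=
  L.Causal ∧ ∀ x : X, IsClosed (L.Jplus x) ∧ IsClosed (L.Jminus x)

/-- Distinguishing. -/
def Distinguishing : Prop :=
  (∀ x y : X, L.Iplus x = L.Iplus y → x = y) ∧ (∀ x y : X, L.Iminus x = L.Iminus y → x = y)

/-- Reflectivity. -/
def Reflective : Prop :=
  (∀ x y : X, L.Iplus x ⊆ L.Iplus y → L.Iminus y ⊆ L.Iminus x) ∧
  (∀ x y : X, L.Iminus y ⊆ L.Iminus x → L.Iplus x ⊆ L.Iplus y)

/-- Causal continuity. -/
def CausallyContinuous : Prop := L.Distinguishing ∧ L.Reflective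

/-- Stable causality: `K⁺` is antisymmetric. -/
def StablyCausal : Prop := ∀ x y : X, (x, y) ∈ L.Kplus → (y, x) ∈ L.Kplus → x = y

end LorentzianPreLengthSpace

/-- A distance homothetic map: `τ̃(f p, f q) = c · τ(p, q)` for some constant `c > 0`. -/
def DistanceHomothetic {X Y : Type*} [MetricSpace X] [MetricSpace Y]
    (LX : LorentzianPreLengthSpace X) (LY : LorentzianPreLengthSpace Y) (f : X → Y) : Prop :=
  ∃ c : ℝ≥0, 0 < c ∧ ∀ p q : X, LY.tau (f p) (f q) = (c : ℝ≥0∞) * LX.tau p q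

/-- A locally causally Lipschitz map. -/
def LocallyCausallyLipschitz {X Y : Type*} [MetricSpace X] [MetricSpace Y]
    (LX : LorentzianPreLengthSpace X) (f : X → Y) : Prop :=
  ∀ x : X, ∃ U : Set X, IsOpen U ∧ x ∈ U ∧ ∃ M : ℝ, 0 < M ∧
    ∀ x1 ∈ U, ∀ x2 ∈ U, LX.causal x1 x2 → dist (f x1) (f x2) ≤ M * dist x1 x2

/-!
A positive multiple of `τ` is positive exactly where `τ` is, so a distance homothetic map
preserves and reflects `≪`; hence `f ⁻¹' I^±(f p) = I^±(p)`. Preimages along a surjection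
determine sets and their inclusions, so the equalities and inclusions between chronological
futures and pasts defining distinction and reflectivity pass from `X` to `Y`.
-/

def PreservesReflectsChron {X Y : Type*} [MetricSpace X] [MetricSpace Y]
    (LX : LorentzianPreLengthSpace X) (LY : LorentzianPreLengthSpace Y) (f : X → Y) : Prop :=
  ∀ p q : X, LY.chron (f p) (f q) ↔ LX.chron p q

theorem DistanceHomothetic.preservesReflectsChron {X Y : Type*} [MetricSpace X] [MetricSpace Y]
    {LX : LorentzianPreLengthSpace X} {LY : LorentzianPreLengthSpace Y} {f : X → Y}
    (hf : DistanceHomothetic LX LY f) : PreservesReflectsChron LX LY f := by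
  obtain ⟨c, hc, hτ⟩ := hf
  intro p q
  rw [← LY.tau_pos_iff, ← LX.tau_pos_iff, hτ, ENNReal.mul_pos_iff]
  exact and_iff_right (ENNReal.coe_pos.mpr hc)

namespace PreservesReflectsChron

open LorentzianPreLengthSpace

variable {X Y : Type*} [MetricSpace X] [MetricSpace Y]
  {LX : LorentzianPreLengthSpace X} {LY : LorentzianPreLengthSpace Y} {f : X → Y}

theorem preimage_Iplus (hf : PreservesReflectsChron LX LY f) (p : X) :
    f ⁻¹' LY.Iplus (f p) = LX.Iplus p :=
  Set.ext fun q => hf p q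

theorem preimage_Iminus (hf : PreservesReflectsChron LX LY f) (p : X) :
    f ⁻¹' LY.Iminus (f p) = LX.Iminus p :=
  Set.ext fun q => hf q p

theorem Iplus_subset_Iplus_iff (hf : PreservesReflectsChron LX LY f)
    (hs : Function.Surjective f) (p q : X) :
    LY.Iplus (f p) ⊆ LY.Iplus (f q) ↔ LX.Iplus p ⊆ LX.Iplus q := by
  rw [← hs.preimage_subset_preimage_iff, hf.preimage_Iplus, hf.preimage_Iplus]

theorem Iminus_subset_Iminus_iff (hf : PreservesReflectsChron LX LY f)
    (hs : Function.Surjective f) (p q : X) :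
    LY.Iminus (f p) ⊆ LY.Iminus (f q) ↔ LX.Iminus p ⊆ LX.Iminus q := by
  rw [← hs.preimage_subset_preimage_iff, hf.preimage_Iminus, hf.preimage_Iminus]

theorem Iplus_eq_Iplus_iff (hf : PreservesReflectsChron LX LY f)
    (hs : Function.Surjective f) (p q : X) :
    LY.Iplus (f p) = LY.Iplus (f q) ↔ LX.Iplus p = LX.Iplus q := by
  rw [← hs.preimage_injective.eq_iff, hf.preimage_Iplus, hf.preimage_Iplus]

theorem Iminus_eq_Iminus_iff (hf : PreservesReflectsChron LX LY f)
    (hs : Function.Surjective f) (p q : X) :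
    LY.Iminus (f p) = LY.Iminus (f q) ↔ LX.Iminus p = LX.Iminus q := by
  rw [← hs.preimage_injective.eq_iff, hf.preimage_Iminus, hf.preimage_Iminus]

theorem distinguishing (hf : PreservesReflectsChron LX LY f) (hs : Function.Surjective f)
    (hX : LX.Distinguishing) : LY.Distinguishing :=
  ⟨hs.forall₂.2 fun p q h => congrArg f (hX.1 p q ((hf.Iplus_eq_Iplus_iff hs p q).1 h)),
    hs.forall₂.2 fun p q h => congrArg f (hX.2 p q ((hf.Iminus_eq_Iminus_iff hs p q).1 h))⟩

theorem reflective (hf : PreservesReflectsChron LX LY f) (hs : Function.Surjective f)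
    (hX : LX.Reflective) : LY.Reflective := by
  simp only [Reflective, hs.forall₂, hf.Iplus_subset_Iplus_iff hs, hf.Iminus_subset_Iminus_iff hs]
  exact hX

theorem causallyContinuous (hf : PreservesReflectsChron LX LY f) (hs : Function.Surjective f)
    (hX : LX.CausallyContinuous) : LY.CausallyContinuous :=
  ⟨hf.distinguishing hs hX.1, hf.reflective hs hX.2⟩

end PreservesReflectsChron

theorem distanceHomothetic_causallyContinuous_general {X Y : Type*}
    [MetricSpace X] [MetricSpace Y]
    (LX : LorentzianPreLengthSpace X) (LY : LorentzianPreLengthSpace Y)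
    (hXcc : LX.CausallyContinuous)
    (f : X → Y) (hsurj : Function.Surjective f) (hhom : DistanceHomothetic LX LY f) :
    LY.CausallyContinuous :=
  hhom.preservesReflectsChron.causallyContinuous hsurj hXcc

/-- causal continuity is transferred along surjective distance homothetic
maps onto Lorentzian length spaces with locally compact metric. -/
theorem distanceHomothetic_causallyContinuous {X Y : Type*}
    [MetricSpace X] [MetricSpace Y] [LocallyCompactSpace Y]
    (LX : LorentzianPreLengthSpace X) (LY : LorentzianPreLengthSpace Y)
    (hX : LX.IsLengthSpace) (hY : LY.IsLengthSpace) (hXcc : LX.CausallyContinuous)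
    (f : X → Y) (hsurj : Function.Surjective f) (hhom : DistanceHomothetic LX LY f) :
    LY.CausallyContinuous :=
  distanceHomothetic_causallyContinuous_general LX LY hXcc f hsurj hhom
end

section
/- Let (X, d, ≪, ≤, τ) and (Y, d̃, ≪̃, ≤̃, τ̃) be Lorentzian length spaces such that X is strongly causal and (Y, d̃) is locally compact, and let f : X → Y be a surjective distance homothetic map that is locally causally Lipschitz. Then for every future directed causal curve γ : [a, b] → X the composition f ∘ γ : [a, b] → Y is a future directed causal curve in Y; consequently f(J⁺(x)) ⊆ J⁺(f(x)) and f(J⁻(x)) ⊆ J⁻(f(x)) for all x ∈ X. -/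
open scoped NNReal ENNReal
open Set Filter Topology

/-! A distance homothety preserves `≪` in both directions, so it is injective on a strongly
causal (hence distinguishing) space. Preservation of `≤` is local: take a small chronological
diamond around a point, on which `f` is causally Lipschitz and which `f` maps into a causally
closed neighbourhood. For `y ≤ z` in the diamond, approximate `y` by `yₙ ≪ y`; timelike curves
from `yₙ` to `z` stay in the diamond and are mapped to causal curves, so `f yₙ ≤_U f z`, and
causal closedness gives `f y ≤ f z` in the limit. Along a causal curve, these local statements
and the local Lipschitz bounds globalise over the compact parameter interval. -/

open Function Metric

theorem rel_of_locally_rel_Icc {α : Type*} {R : α → α → Prop}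
    (htrans : ∀ {x y z}, R x y → R y z → R x z) {g : ℝ → α} {a b : ℝ}
    (hloc : ∀ u ∈ Icc a b, ∃ V ∈ 𝓝[Icc a b] u, ∀ s ∈ V, ∀ t ∈ V, s ≤ t → R (g s) (g t))
    {s t : ℝ} (hs : s ∈ Icc a b) (ht : t ∈ Icc a b) (hst : s ≤ t) : R (g s) (g t) := by
  choose V hV hVR using hloc
  obtain ⟨E, hE, hleb⟩ := lebesgue_number_lemma_nhdsWithin' isCompact_Icc hV
  obtain ⟨ε, hε, hεE⟩ := mem_uniformity_dist.mp hE
  have hnear : ∀ s ∈ Icc a b, ∀ t ∈ Icc a b, s ≤ t → t - s < ε → R (g s) (g t) := by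
    intro s hs t ht hst hts
    obtain ⟨⟨u, hu⟩, hsub⟩ := hleb s hs
    have hball : ∀ r ∈ Icc a b, dist s r < ε → r ∈ V u hu := fun r hr hsr => hsub ⟨hεE hsr, hr⟩
    exact hVR u hu s (hball s hs (by simpa using hε)) t
      (hball t ht (by rwa [Real.dist_eq, abs_sub_comm, abs_of_nonneg (by linarith)])) hst
  have hchain : ∀ n : ℕ, ∀ s ∈ Icc a b, ∀ t ∈ Icc a b, s ≤ t → t - s < (n + 1) * (ε / 2) →
      R (g s) (g t) := by
    intro n
    induction n with
    | zero => exact fun s hs t ht hst h => hnear s hs t ht hst (by linarith)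
    | succ n ih =>
      intro s hs t ht hst h
      by_cases hts : t - s < ε
      · exact hnear s hs t ht hst hts
      have hr : s + ε / 2 ∈ Icc a b := ⟨by linarith [hs.1], by linarith [ht.2]⟩
      exact htrans (hnear s hs _ hr (by linarith) (by linarith))
        (ih _ hr t ht (by linarith) (by push_cast at h; linarith))
  obtain ⟨n, hn⟩ := exists_nat_gt ((t - s) / (ε / 2))
  refine hchain n s hs t ht hst ?_
  rw [div_lt_iff₀ (by positivity)] at hn
  linarith

theorem LipschitzOnWith.comp_of_rel {X Y : Type*} [PseudoMetricSpace X] [PseudoMetricSpace Y]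
    {R : X → X → Prop} {f : X → Y} {W : Set X} {M : ℝ≥0}
    (hf : ∀ x ∈ W, ∀ y ∈ W, R x y → dist (f x) (f y) ≤ M * dist x y)
    {γ : ℝ → X} {S : Set ℝ} {K : ℝ≥0} (hγ : LipschitzOnWith K γ S)
    (hR : ∀ s ∈ S, ∀ t ∈ S, s < t → R (γ s) (γ t)) (hW : MapsTo γ S W) :
    LipschitzOnWith (M * K) (f ∘ γ) S := by
  have key : ∀ s ∈ S, ∀ t ∈ S, s < t → dist (f (γ s)) (f (γ t)) ≤ (M * K : ℝ≥0) * dist s t :=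
    fun s hs t ht hst => calc
      _ ≤ M * dist (γ s) (γ t) := hf _ (hW hs) _ (hW ht) (hR s hs t ht hst)
      _ ≤ M * (K * dist s t) := by gcongr; exact hγ.dist_le_mul s hs t ht
      _ = _ := by push_cast; ring
  refine LipschitzOnWith.of_dist_le_mul fun s hs t ht => ?_
  rcases lt_trichotomy s t with h | rfl | h
  · exact key s hs t ht h
  · simp
  · rw [dist_comm, dist_comm s]
    exact key t ht s hs h

namespace LorentzianPreLengthSpace

variable {X : Type*} [MetricSpace X] {L : LorentzianPreLengthSpace X}

theorem chron_of_chron_of_causal {x y z : X} (hxy : L.chron x y) (hyz : L.causal y z) :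
    L.chron x z :=
  L.tau_pos_iff.mp <| (L.tau_pos_iff.mpr hxy).trans_le <|
    le_self_add.trans (L.tau_rev_triangle (L.chron_imp_causal hxy) hyz)

theorem chron_of_causal_of_chron {x y z : X} (hxy : L.causal x y) (hyz : L.chron y z) :
    L.chron x z :=
  L.tau_pos_iff.mp <| (L.tau_pos_iff.mpr hyz).trans_le <|
    le_add_self.trans (L.tau_rev_triangle hxy (L.chron_imp_causal hyz))

theorem IsFutureCausalCurve.causal_of_le {γ : ℝ → X} {a b : ℝ}
    (hγ : L.IsFutureCausalCurve γ a b) {s t : ℝ} (hs : s ∈ Icc a b) (ht : t ∈ Icc a b)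
    (hst : s ≤ t) : L.causal (γ s) (γ t) :=
  hst.eq_or_lt.elim (fun h => h ▸ L.causal_refl _) (hγ.2.2.2 hs ht)

theorem IsFutureCausalCurve.causal_endpoints {γ : ℝ → X} {a b : ℝ}
    (hγ : L.IsFutureCausalCurve γ a b) : L.causal (γ a) (γ b) :=
  hγ.causal_of_le (left_mem_Icc.2 hγ.1.le) (right_mem_Icc.2 hγ.1.le) hγ.1.le

theorem IsFutureTimelikeCurve.isFutureCausalCurve {γ : ℝ → X} {a b : ℝ}
    (hγ : L.IsFutureTimelikeCurve γ a b) : L.IsFutureCausalCurve γ a b :=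
  ⟨hγ.1, hγ.2.1, hγ.2.2.1, fun _ hs _ ht hst => L.chron_imp_causal (hγ.2.2.2 hs ht hst)⟩

theorem CausalInside.causal {U : Set X} {p q : X} (h : L.CausalInside U p q) : L.causal p q := by
  obtain ⟨γ, a, b, hγ, rfl, rfl, -⟩ := h
  exact hγ.causal_endpoints

theorem Localizable.exists_chron (hloc : L.Localizable) (x : X) :
    (∃ p, L.chron p x) ∧ ∃ q, L.chron x q := by
  obtain ⟨Ω, -, hx, -, ω, -, -, -, -, -, hI, -⟩ := hloc x
  obtain ⟨⟨q, hq, -⟩, ⟨p, hp, -⟩⟩ := hI x hx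
  exact ⟨⟨p, hp⟩, ⟨q, hq⟩⟩

theorem CausallyPathConnected.mem_closure_diamond (hpc : L.CausallyPathConnected) {p q : X}
    (h : L.chron p q) :
    p ∈ closure (L.Iplus p ∩ L.Iminus q) ∧ q ∈ closure (L.Iplus p ∩ L.Iminus q) := by
  obtain ⟨γ, a, b, ⟨hab, ⟨K, hK⟩, -, hchron⟩, rfl, rfl⟩ := hpc.2 p q h
  have hcont : ContinuousOn γ (closure (Ioo a b)) := by
    rw [closure_Ioo hab.ne]
    exact hK.continuousOn
  have hsub : γ '' Icc a b ⊆ closure (L.Iplus (γ a) ∩ L.Iminus (γ b)) := by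
    rw [← closure_Ioo hab.ne]
    refine hcont.image_closure.trans (closure_mono ?_)
    rintro _ ⟨r, hr, rfl⟩
    exact ⟨hchron (left_mem_Icc.2 hab.le) (Ioo_subset_Icc_self hr) hr.1,
      hchron (Ioo_subset_Icc_self hr) (right_mem_Icc.2 hab.le) hr.2⟩
  exact ⟨hsub (mem_image_of_mem _ (left_mem_Icc.2 hab.le)),
    hsub (mem_image_of_mem _ (right_mem_Icc.2 hab.le))⟩

theorem StronglyCausal.isOpen_diamond (hsc : L.StronglyCausal) (p q : X) :
    IsOpen (L.Iplus p ∩ L.Iminus q) := by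
  have h : IsOpen[L.AlexandrovTopology] (L.Iplus p ∩ L.Iminus q) :=
    TopologicalSpace.GenerateOpen.basic _ ⟨p, q, rfl⟩
  rwa [hsc] at h

theorem StronglyCausal.exists_diamond_subset (hsc : L.StronglyCausal)
    (hpc : L.CausallyPathConnected) (hloc : L.Localizable) {x : X} {V : Set X} (hV : V ∈ 𝓝 x) :
    ∃ p q, p ∈ V ∧ x ∈ L.Iplus p ∩ L.Iminus q ∧ L.Iplus p ∩ L.Iminus q ⊆ V := by
  have hB := TopologicalSpace.isTopologicalBasis_of_subbasis hsc.symm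
  obtain ⟨_, ⟨F, hF, rfl⟩, hxO, hOV⟩ := hB.mem_nhds_iff.mp hV
  have hO : ⋂₀ F ∈ 𝓝 x := (hB.isOpen ⟨F, hF, rfl⟩).mem_nhds hxO
  obtain ⟨⟨p₀, hp₀⟩, ⟨q₀, hq₀⟩⟩ := hloc.exists_chron x
  obtain ⟨p, hpO, -, hpx⟩ := mem_closure_iff_nhds.mp (hpc.mem_closure_diamond hp₀).2 _ hO
  obtain ⟨q, hqO, hxq, -⟩ := mem_closure_iff_nhds.mp (hpc.mem_closure_diamond hq₀).1 _ hO
  refine ⟨p, q, hOV hpO, ⟨hpx, hxq⟩, fun z hz => hOV fun s hs => ?_⟩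
  obtain ⟨a, b, rfl⟩ := hF.2 hs
  exact ⟨L.chron_trans (hpO _ hs).1 hz.1, L.chron_trans hz.2 (hqO _ hs).2⟩

theorem StronglyCausal.eq_of_forall_chron_iff (hsc : L.StronglyCausal) {x y : X}
    (hpast : ∀ r, L.chron r x ↔ L.chron r y) (hfuture : ∀ r, L.chron x r ↔ L.chron y r) :
    x = y := by
  have hdiamonds : {s | x ∈ s ∧ s ∈ {s : Set X | ∃ p q, s = L.Iplus p ∩ L.Iminus q}} =
      {s | y ∈ s ∧ s ∈ {s : Set X | ∃ p q, s = L.Iplus p ∩ L.Iminus q}} := by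
    ext s
    refine and_congr_left fun ⟨p, q, hs⟩ => ?_
    subst hs
    exact and_congr (hpast p) (hfuture q)
  have hnhds : @nhds X L.AlexandrovTopology x = @nhds X L.AlexandrovTopology y := by
    rw [AlexandrovTopology, TopologicalSpace.nhds_generateFrom,
      TopologicalSpace.nhds_generateFrom, hdiamonds]
  rw [hsc] at hnhds
  exact Inseparable.eq hnhds

end LorentzianPreLengthSpace

namespace DistanceHomothetic

open LorentzianPreLengthSpace

variable {X Y : Type*} [MetricSpace X] [MetricSpace Y]
  {LX : LorentzianPreLengthSpace X} {LY : LorentzianPreLengthSpace Y} {f : X → Y}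

theorem chron_iff (hhom : DistanceHomothetic LX LY f) {x y : X} :
    LY.chron (f x) (f y) ↔ LX.chron x y := by
  obtain ⟨c, hc, hτ⟩ := hhom
  rw [← LY.tau_pos_iff, ← LX.tau_pos_iff, hτ, pos_iff_ne_zero, pos_iff_ne_zero, mul_ne_zero_iff]
  simp [hc.ne']

theorem injective (hhom : DistanceHomothetic LX LY f) (hsc : LX.StronglyCausal) :
    Injective f := fun x y hxy =>
  hsc.eq_of_forall_chron_iff
    (fun r => by rw [← hhom.chron_iff (x := r) (y := x), hxy, hhom.chron_iff])
    (fun r => by rw [← hhom.chron_iff (x := x) (y := r), hxy, hhom.chron_iff])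

theorem causalInside_of_chron (hhom : DistanceHomothetic LX LY f) (hinj : Injective f)
    (hpc : LX.CausallyPathConnected) {p q : X} {U : Set Y} {M : ℝ≥0}
    (hlip : ∀ y ∈ LX.Iplus p ∩ LX.Iminus q, ∀ z ∈ LX.Iplus p ∩ LX.Iminus q, LX.causal y z →
      dist (f y) (f z) ≤ M * dist y z)
    (hU : MapsTo f (LX.Iplus p ∩ LX.Iminus q) U) {y z : X} (hpy : LX.chron p y)
    (hzq : LX.chron z q) (hyz : LX.chron y z) : LY.CausalInside U (f y) (f z) := by
  obtain ⟨γ, a, b, hγ, rfl, rfl⟩ := hpc.2 y z hyz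
  have hγD : MapsTo γ (Icc a b) (LX.Iplus p ∩ LX.Iminus q) := fun r hr =>
    have hγc := hγ.isFutureCausalCurve
    ⟨chron_of_chron_of_causal hpy (hγc.causal_of_le (left_mem_Icc.2 hγ.1.le) hr hr.1),
      chron_of_causal_of_chron (hγc.causal_of_le hr (right_mem_Icc.2 hγ.1.le) hr.2) hzq⟩
  obtain ⟨hab, ⟨K, hK⟩, ⟨s, hs, t, ht, hne⟩, hchron⟩ := hγ
  refine ⟨f ∘ γ, a, b, ⟨hab, ⟨M * K, ?_⟩, ⟨s, hs, t, ht, hinj.ne hne⟩, ?_⟩, rfl, rfl, ?_⟩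
  · exact hK.comp_of_rel hlip (fun s hs t ht hst => LX.chron_imp_causal (hchron hs ht hst)) hγD
  · exact fun s hs t ht hst => LY.chron_imp_causal (hhom.chron_iff.2 (hchron hs ht hst))
  · exact (hU.comp hγD).image_subset

theorem exists_mem_nhds_causal_map (hhom : DistanceHomothetic LX LY f)
    (hpc : LX.CausallyPathConnected) (hloc : LX.Localizable) (hsc : LX.StronglyCausal)
    (hYcc : LY.LocallyCausallyClosed) (hlip : LocallyCausallyLipschitz LX f) (x : X) :
    ∃ D ∈ 𝓝 x, ∀ y ∈ D, ∀ z ∈ D, LX.causal y z → LY.causal (f y) (f z) := by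
  obtain ⟨W, hWo, hxW, M, hM, hWlip⟩ := hlip x
  obtain ⟨U, hUo, hxU, hUcc⟩ := hYcc (f x)
  obtain ⟨ε, hε, hεU⟩ := isOpen_iff.mp hUo (f x) hxU
  obtain ⟨p, q, ⟨hpW, hpx⟩, hxD, hDV⟩ := hsc.exists_diamond_subset hpc hloc
    (inter_mem (hWo.mem_nhds hxW) (ball_mem_nhds x (by positivity : 0 < ε / (3 * M))))
  set D := LX.Iplus p ∩ LX.Iminus q
  have hlipD : ∀ y ∈ D, ∀ z ∈ D, LX.causal y z → dist (f y) (f z) ≤ M * dist y z :=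
    fun y hy z hz => hWlip y (hDV hy).1 z (hDV hz).1
  -- `f` is only controlled on causal pairs, so distances are measured from `f p`, below all of `D`
  have hfD : MapsTo f D U := fun z hz => hεU <| by
    have hpz := hWlip p hpW z (hDV hz).1 (LX.chron_imp_causal hz.1)
    have hpx' := hWlip p hpW x hxW (LX.chron_imp_causal hxD.1)
    have hzx : dist z x < ε / (3 * M) := (hDV hz).2
    rw [mem_ball] at hpx ⊢
    calc dist (f z) (f x) ≤ dist (f p) (f z) + dist (f p) (f x) := dist_triangle_left _ _ _
      _ ≤ M * (dist z x + dist p x) + M * dist p x := by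
          refine add_le_add (hpz.trans ?_) hpx'
          gcongr
          exact (dist_triangle_right p z x).trans_eq (add_comm _ _)
      _ < M * (ε / (3 * M) + ε / (3 * M)) + M * (ε / (3 * M)) := by gcongr
      _ = ε := by field_simp; ring
  refine ⟨D, (hsc.isOpen_diamond p q).mem_nhds hxD, fun y hy z hz hyz => ?_⟩
  obtain ⟨yn, hynD, hyn⟩ := mem_closure_iff_seq_limit.mp (hpc.mem_closure_diamond hy.1).2
  have hynD' : ∀ n, yn n ∈ D := fun n => ⟨(hynD n).1, LX.chron_trans (hynD n).2 hy.2⟩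
  have hCI : ∀ n, LY.CausalInside U (f (yn n)) (f z) := fun n =>
    hhom.causalInside_of_chron (hhom.injective hsc) hpc (M := ⟨M, hM.le⟩) hlipD hfD
      (hynD n).1 hz.2 (chron_of_chron_of_causal (hynD n).2 hyz)
  have hfyn : Tendsto (fun n => f (yn n)) atTop (𝓝 (f y)) := by
    refine tendsto_iff_dist_tendsto_zero.2 (squeeze_zero (fun n => dist_nonneg)
      (fun n => hlipD _ (hynD' n) y hy (LX.chron_imp_causal (hynD n).2)) ?_)
    simpa using (tendsto_iff_dist_tendsto_zero.1 hyn).const_mul M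
  exact (hUcc _ _ _ _ hCI hfyn tendsto_const_nhds (hfD hy) (hfD hz)).causal

theorem isFutureCausalCurve_comp (hhom : DistanceHomothetic LX LY f)
    (hpc : LX.CausallyPathConnected) (hloc : LX.Localizable) (hsc : LX.StronglyCausal)
    (hYcc : LY.LocallyCausallyClosed) (hlip : LocallyCausallyLipschitz LX f) {γ : ℝ → X}
    {a b : ℝ} (hγ : LX.IsFutureCausalCurve γ a b) : LY.IsFutureCausalCurve (f ∘ γ) a b := by
  have ⟨hab, ⟨K, hK⟩, ⟨s₀, hs₀, t₀, ht₀, hne⟩, _⟩ := hγ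
  have hcont : ContinuousOn γ (Icc a b) := hK.continuousOn
  refine ⟨hab, ?_, ⟨s₀, hs₀, t₀, ht₀, (hhom.injective hsc).ne hne⟩, fun s hs t ht hst => ?_⟩
  · refine LocallyLipschitzOn.exists_lipschitzOnWith_of_compact isCompact_Icc fun u hu => ?_
    obtain ⟨W, hWo, huW, M, hM, hWlip⟩ := hlip (γ u)
    exact ⟨_, _, inter_mem (hcont u hu (hWo.mem_nhds huW)) self_mem_nhdsWithin,
      (hK.mono inter_subset_right).comp_of_rel (M := ⟨M, hM.le⟩) hWlip
        (fun s hs t ht hst => hγ.2.2.2 hs.2 ht.2 hst) fun s hs => hs.1⟩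
  refine rel_of_locally_rel_Icc (R := LY.causal) LY.causal_trans (fun u hu => ?_) hs ht hst.le
  obtain ⟨D, hD, hDcausal⟩ := hhom.exists_mem_nhds_causal_map hpc hloc hsc hYcc hlip (γ u)
  exact ⟨γ ⁻¹' D ∩ Icc a b, inter_mem (hcont u hu hD) self_mem_nhdsWithin,
    fun s hs t ht hst => hDcausal _ hs.1 _ ht.1 (hγ.causal_of_le hs.2 ht.2 hst)⟩

end DistanceHomothetic

theorem LorentzianPreLengthSpace.CausallyPathConnected.causal_map
    {X Y : Type*} [MetricSpace X] [MetricSpace Y]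
    {LX : LorentzianPreLengthSpace X} {LY : LorentzianPreLengthSpace Y}
    (hpc : LX.CausallyPathConnected) {f : X → Y}
    (hf : ∀ γ a b, LX.IsFutureCausalCurve γ a b → LY.IsFutureCausalCurve (f ∘ γ) a b)
    {x y : X} (h : LX.causal x y) : LY.causal (f x) (f y) := by
  rcases eq_or_ne x y with rfl | hne
  · exact LY.causal_refl _
  obtain ⟨γ, a, b, hγ, rfl, rfl⟩ := hpc.1 x y h hne
  exact (hf γ a b hγ).causal_endpoints

theorem distanceHomothetic_maps_causal_curves_general {X Y : Type*}
    [MetricSpace X] [MetricSpace Y]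
    (LX : LorentzianPreLengthSpace X) (LY : LorentzianPreLengthSpace Y)
    (hX : LX.IsLengthSpace) (hY : LY.IsLengthSpace) (hXsc : LX.StronglyCausal)
    (f : X → Y) (hhom : DistanceHomothetic LX LY f)
    (hlip : LocallyCausallyLipschitz LX f) :
    (∀ (γ : ℝ → X) (a b : ℝ), LX.IsFutureCausalCurve γ a b →
        LY.IsFutureCausalCurve (f ∘ γ) a b) ∧
    (∀ x : X, f '' LX.Jplus x ⊆ LY.Jplus (f x)) ∧
    (∀ x : X, f '' LX.Jminus x ⊆ LY.Jminus (f x)) := by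
  have hcurves : ∀ (γ : ℝ → X) (a b : ℝ), LX.IsFutureCausalCurve γ a b →
      LY.IsFutureCausalCurve (f ∘ γ) a b := fun γ a b hγ =>
    hhom.isFutureCausalCurve_comp hX.1 hX.2.2.1 hXsc hY.2.1 hlip hγ
  refine ⟨hcurves, fun x => ?_, fun x => ?_⟩ <;> rintro _ ⟨y, hy, rfl⟩ <;>
    exact hX.1.causal_map hcurves hy

/-- a surjective, locally causally Lipschitz, distance homothetic map from a
strongly causal Lorentzian length space to a Lorentzian length space with locally compact
metric maps future directed causal curves to future directed causal curves; consequently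
`f(J±(x)) ⊆ J±(f(x))`. -/
theorem distanceHomothetic_maps_causal_curves {X Y : Type*}
    [MetricSpace X] [MetricSpace Y] [LocallyCompactSpace Y]
    (LX : LorentzianPreLengthSpace X) (LY : LorentzianPreLengthSpace Y)
    (hX : LX.IsLengthSpace) (hY : LY.IsLengthSpace) (hXsc : LX.StronglyCausal)
    (f : X → Y) (hsurj : Function.Surjective f) (hhom : DistanceHomothetic LX LY f)
    (hlip : LocallyCausallyLipschitz LX f) :
    (∀ (γ : ℝ → X) (a b : ℝ), LX.IsFutureCausalCurve γ a b →
        LY.IsFutureCausalCurve (f ∘ γ) a b) ∧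
    (∀ x : X, f '' LX.Jplus x ⊆ LY.Jplus (f x)) ∧
    (∀ x : X, f '' LX.Jminus x ⊆ LY.Jminus (f x)) :=
  distanceHomothetic_maps_causal_curves_general LX LY hX hY hXsc f hhom hlip
end
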